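/- arXiv:1106.1731 — 5 statements merged into one kernel-verified Lean document; each statement's English description precedes it below -/
import Mathlib

section
/- Suppose |𝓒| = |𝓜| = n and 𝓟 is an n × n transition probability matrix (columns indexed by messages, rows by ciphertexts). There exists a finite key set 𝓚, a key distribution P_K, a deterministic encryption Enc : 𝓜 × 𝓚 → 𝓒 such that for each fixed key k the map m ↦ Enc(m,k) is a bijection (hence decryptable), and Pr[Enc(m,K) = c] = 𝓟(c,m) for all c, m, if and only if 𝓟 is doubly stochastic (all row sums and column sums equal 1). -/
open Finset

/-- A transition probability matrix `𝓟` (rows = ciphertexts,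
columns = messages, columns sum to 1) arises from some symmetric key
cryptosystem (finite key set, key distribution, encryption that is a bijection
on messages for each fixed key) iff `𝓟` is doubly stochastic. -/
theorem cryptosystem_exists_iff_doublyStochastic
    (n : ℕ) (𝓟 : Fin n → Fin n → ℝ)
    (hnonneg : ∀ c m, 0 ≤ 𝓟 c m)
    (hcol : ∀ m, ∑ c, 𝓟 c m = 1) :
    (∃ (𝓚 : Type) (_ : Fintype 𝓚) (pK : 𝓚 → ℝ) (Enc : Fin n → 𝓚 → Fin n),
        (∀ k, 0 ≤ pK k) ∧ (∑ k, pK k = 1) ∧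
        (∀ k, Function.Bijective (fun m => Enc m k)) ∧
        (∀ c m, ∑ k ∈ univ.filter (fun k => Enc m k = c), pK k = 𝓟 c m)) ↔
    ((∀ c, ∑ m, 𝓟 c m = 1) ∧ (∀ m, ∑ c, 𝓟 c m = 1)) := by
  constructor
  · rintro ⟨𝓚, inst, pK, Enc, hpos, hsum, hbij, hPr⟩
    refine ⟨fun c => ?_, hcol⟩
    calc ∑ m, 𝓟 c m = ∑ m, ∑ k ∈ univ.filter (fun k => Enc m k = c), pK k := by
          simp_rw [hPr]
      _ = ∑ m, ∑ k, if Enc m k = c then pK k else 0 := by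
          simp_rw [Finset.sum_filter]
      _ = ∑ k, ∑ m, if Enc m k = c then pK k else 0 := Finset.sum_comm
      _ = ∑ k, pK k := by
          refine Finset.sum_congr rfl fun k _ => ?_
          obtain ⟨m0, hm0⟩ := (hbij k).2 c
          have : ∀ m : Fin n, (Enc m k = c) ↔ (m = m0) :=
            fun m => ⟨fun h => (hbij k).1 (h.trans hm0.symm), fun h => h ▸ hm0⟩
          simp_rw [this]
          simp
      _ = 1 := hsum
  · rintro ⟨hrow, -⟩
    have hM : Matrix.of 𝓟 ∈ doublyStochastic ℝ (Fin n) := by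
      rw [mem_doublyStochastic_iff_sum]
      exact ⟨hnonneg, hrow, hcol⟩
    obtain ⟨w, hw0, hw1, hw2⟩ := exists_eq_sum_perm_of_mem_doublyStochastic hM
    refine ⟨Equiv.Perm (Fin n), inferInstance, w, fun m σ => σ.symm m,
      hw0, hw1, fun σ => σ.symm.bijective, fun c m => ?_⟩
    have := congrFun (congrFun hw2 c) m
    simp only [Matrix.sum_apply, Finset.sum_apply, Matrix.smul_apply, Equiv.Perm.permMatrix,
      PEquiv.toMatrix_apply, Equiv.toPEquiv_apply, Option.mem_def, Option.some.injEq,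
      smul_eq_mul, mul_ite, mul_one, mul_zero, Matrix.of_apply] at this
    rw [Finset.sum_filter]
    rw [← this]
    refine Finset.sum_congr rfl fun σ _ => ?_
    have : (σ.symm m = c) ↔ (σ c = m) := by
      constructor
      · intro h; rw [← h]; exact σ.apply_symm_apply m
      · intro h; rw [← h]; exact σ.symm_apply_apply c
    simp_rw [this]
end

section
/- (PS^{cm} implies IND with factor 2) Let {P_{C|M}(·|m)}_{m∈𝓜} be a family of probability distributions on a finite set 𝓒. Suppose for every distribution P_M on 𝓜 the joint distribution P_{CM}(c,m) := P_{C|M}(c|m)·P_M(m) satisfies d(P_{CM}, P_C ⊗ P_M) ≤ ε, where P_C is the marginal on 𝓒. Then for all m₀, m₁ ∈ 𝓜, d(P_{C|M}(·|m₀), P_{C|M}(·|m₁)) ≤ 2ε. -/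
open Finset

/-- PS^{cm} ⟹ IND with factor 2: if for every message
distribution the joint distribution is within TV distance ε of the product of
its marginals, then any two conditional ciphertext distributions are within
2ε. -/
theorem ps_cm_implies_ind
    {𝓒 𝓜 : Type*} [Fintype 𝓒] [Fintype 𝓜]
    (PCgM : 𝓜 → 𝓒 → ℝ)
    (hnn : ∀ m c, 0 ≤ PCgM m c) (hsum : ∀ m, ∑ c, PCgM m c = 1)
    (ε : ℝ) (hε0 : 0 ≤ ε) (hε1 : ε ≤ 1)
    (hPS : ∀ PM : 𝓜 → ℝ, (∀ m, 0 ≤ PM m) → (∑ m, PM m = 1) →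
      (1 / 2) * ∑ c, ∑ m,
        |PCgM m c * PM m - (∑ m', PCgM m' c * PM m') * PM m| ≤ ε) :
    ∀ m₀ m₁ : 𝓜, (1 / 2) * ∑ c, |PCgM m₀ c - PCgM m₁ c| ≤ 2 * ε := by
  classical
  intro m₀ m₁
  by_cases hmm : m₀ = m₁
  · subst hmm
    simp
    linarith
  · set PM : 𝓜 → ℝ := fun m => (if m = m₀ then (1:ℝ)/2 else 0) + (if m = m₁ then 1/2 else 0)
      with hPM
    have hnnPM : ∀ m, 0 ≤ PM m := by
      intro m; simp only [hPM]; positivity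
    have hsumPM : ∑ m, PM m = 1 := by
      simp [hPM, Finset.sum_add_distrib, Finset.sum_ite_eq']
      norm_num
    have hS : ∀ c : 𝓒, (∑ m', PCgM m' c * PM m') = (PCgM m₀ c + PCgM m₁ c) / 2 := by
      intro c
      simp [hPM, mul_add, Finset.sum_add_distrib, mul_ite, Finset.sum_ite_eq']
      ring
    have hinner : ∀ c : 𝓒, (∑ m, |PCgM m c * PM m - (∑ m', PCgM m' c * PM m') * PM m|)
        = |PCgM m₀ c - PCgM m₁ c| / 2 := by
      intro c
      have h1 : ∀ m, |PCgM m c * PM m - (∑ m', PCgM m' c * PM m') * PM m|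
          = |PCgM m c - (PCgM m₀ c + PCgM m₁ c) / 2| * PM m := by
        intro m
        rw [hS c, show PCgM m c * PM m - (PCgM m₀ c + PCgM m₁ c) / 2 * PM m
            = (PCgM m c - (PCgM m₀ c + PCgM m₁ c) / 2) * PM m by ring,
          abs_mul, abs_of_nonneg (hnnPM m)]
      rw [Finset.sum_congr rfl (fun m _ => h1 m)]
      simp [hPM, mul_add, mul_ite, Finset.sum_add_distrib, Finset.sum_ite_eq']
      rw [show PCgM m₀ c - (PCgM m₀ c + PCgM m₁ c) / 2 = (PCgM m₀ c - PCgM m₁ c) / 2 by ring,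
        show PCgM m₁ c - (PCgM m₀ c + PCgM m₁ c) / 2 = -((PCgM m₀ c - PCgM m₁ c) / 2) by ring,
        abs_neg, abs_div, abs_two]
      ring
    have key := hPS PM hnnPM hsumPM
    rw [Finset.sum_congr rfl (fun c _ => hinner c)] at key
    rw [← Finset.sum_div] at key
    linarith
end

section
/- (Statistical semantic security implies IND with factor 4) Let {P_{C|M}(·|m)}_{m∈𝓜} be a family of distributions on a finite set 𝓒. Suppose that for every message distribution P_M and every f : 𝓒 → {0,1} there exists a random variable G_f taking values in {0,1}, independent of M, such that for every h : 𝓜 → {0,1}, |Pr[f(C) = h(M)] − Pr[G_f = h(M)]| ≤ ε. Then for all m₀, m₁ ∈ 𝓜, d(P_{C|M}(·|m₀), P_{C|M}(·|m₁)) ≤ 4ε. -/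
open Finset

/-- statistical semantic security ⟹ IND with factor 4: if for
every message distribution `PM` and every `f : 𝓒 → Bool` there is a Boolean
random variable `G_f` (given by its distribution `g`), independent of `M`, such
that `|Pr[f(C) = h(M)] − Pr[G_f = h(M)]| ≤ ε` for all `h`, then any two
conditional ciphertext distributions are within TV distance 4ε. -/
theorem semantic_security_implies_ind
    {𝓒 𝓜 : Type*} [Fintype 𝓒] [Fintype 𝓜]
    (PCgM : 𝓜 → 𝓒 → ℝ)
    (hnn : ∀ m c, 0 ≤ PCgM m c) (hsum : ∀ m, ∑ c, PCgM m c = 1)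
    (ε : ℝ) (hε0 : 0 ≤ ε) (hε1 : ε ≤ 1)
    (hSS : ∀ PM : 𝓜 → ℝ, (∀ m, 0 ≤ PM m) → (∑ m, PM m = 1) →
      ∀ f : 𝓒 → Bool, ∃ g : Bool → ℝ,
        (∀ b, 0 ≤ g b) ∧ (∑ b, g b = 1) ∧
        ∀ h : 𝓜 → Bool,
          |(∑ p ∈ (univ : Finset (𝓒 × 𝓜)).filter (fun p => f p.1 = h p.2),
              PCgM p.2 p.1 * PM p.2) -
           (∑ m, g (h m) * PM m)| ≤ ε) :
    ∀ m₀ m₁ : 𝓜, (1 / 2) * ∑ c, |PCgM m₀ c - PCgM m₁ c| ≤ 4 * ε := by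
  intro m₀ m₁
  classical
  rcases eq_or_ne m₀ m₁ with rfl | hne
  · have h0 : ∑ c, |PCgM m₀ c - PCgM m₀ c| = 0 := by simp
    rw [h0]
    nlinarith
  · set PM : 𝓜 → ℝ := fun m =>
      (if m = m₀ then (1:ℝ)/2 else 0) + (if m = m₁ then (1:ℝ)/2 else 0) with hPM
    have hPMnn : ∀ m, 0 ≤ PM m := by
      intro m; dsimp [PM]; split_ifs <;> norm_num
    have hPMsum : ∑ m, PM m = 1 := by
      simp [PM, Finset.sum_add_distrib, Finset.sum_ite_eq']
      norm_num
    set f : 𝓒 → Bool := fun c => decide (PCgM m₁ c < PCgM m₀ c) with hf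
    obtain ⟨g, hg0, hg1, hgh⟩ := hSS PM hPMnn hPMsum f
    set h₁ : 𝓜 → Bool := fun m => decide (m = m₀) with hh1
    set h₂ : 𝓜 → Bool := fun m => !decide (m = m₀) with hh2
    have E1 := hgh h₁
    have E2 := hgh h₂
    -- the guess terms coincide
    have hT : (∑ m, g (h₁ m) * PM m) = ∑ m, g (h₂ m) * PM m := by
      have t1 : ∀ (h : 𝓜 → Bool), (∑ m, g (h m) * PM m)
          = g (h m₀) * (1/2) + g (h m₁) * (1/2) := by
        intro h
        have : ∀ m, g (h m) * PM m
            = (if m = m₀ then g (h m) * (1/2) else 0)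
              + (if m = m₁ then g (h m) * (1/2) else 0) := by
          intro m; dsimp [PM]; split_ifs <;> ring
        rw [Finset.sum_congr rfl fun m _ => this m, Finset.sum_add_distrib]
        simp [Finset.sum_ite_eq']
      rw [t1 h₁, t1 h₂]
      simp only [hh1, hh2]
      simp [hne, hne.symm]
      ring
    -- the adversary terms differ by the TV distance
    have hS : (∑ p ∈ (univ : Finset (𝓒 × 𝓜)).filter (fun p => f p.1 = h₁ p.2),
          PCgM p.2 p.1 * PM p.2)
        - (∑ p ∈ (univ : Finset (𝓒 × 𝓜)).filter (fun p => f p.1 = h₂ p.2),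
          PCgM p.2 p.1 * PM p.2)
        = (1/2) * ∑ c, |PCgM m₀ c - PCgM m₁ c| := by
      rw [Finset.sum_filter, Finset.sum_filter, ← Finset.sum_sub_distrib,
        Fintype.sum_prod_type, Finset.mul_sum]
      refine Finset.sum_congr rfl fun c _ => ?_
      have inner : ∀ m,
          ((if f c = h₁ m then PCgM m c * PM m else 0)
            - (if f c = h₂ m then PCgM m c * PM m else 0))
          = (if m = m₀ then (if f c then PCgM m₀ c / 2 else -(PCgM m₀ c / 2)) else 0)
            + (if m = m₁ then (if f c then -(PCgM m₁ c / 2) else PCgM m₁ c / 2) else 0) := by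
        intro m
        dsimp [PM, h₁, h₂]
        rcases eq_or_ne m m₀ with rfl | h0
        · simp [hne]
          cases hb : f c <;> simp <;> ring
        · rcases eq_or_ne m m₁ with rfl | h1
          · simp [h0, hne.symm]
            cases hb : f c <;> simp <;> ring
          · simp [h0, h1]
      rw [Finset.sum_congr rfl fun m _ => inner m, Finset.sum_add_distrib]
      simp only [Finset.sum_ite_eq', Finset.mem_univ, if_true]
      rcases lt_trichotomy (PCgM m₁ c) (PCgM m₀ c) with hlt | heq | hgt
      · have hfc : f c = true := by simp [hf, hlt]
        rw [hfc, abs_of_pos (by linarith)]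
        simp; ring
      · have hfc : f c = false := by simp [hf, heq]
        rw [hfc]
        simp [heq]
      · have hfc : f c = false := by simp [hf, not_lt.mpr hgt.le]
        rw [hfc, abs_of_neg (by linarith)]
        simp; ring
    -- conclude
    have htv0 : 0 ≤ (1/2) * ∑ c, |PCgM m₀ c - PCgM m₁ c| := by positivity
    set S₁ := ∑ p ∈ (univ : Finset (𝓒 × 𝓜)).filter (fun p => f p.1 = h₁ p.2),
        PCgM p.2 p.1 * PM p.2 with hS1
    set S₂ := ∑ p ∈ (univ : Finset (𝓒 × 𝓜)).filter (fun p => f p.1 = h₂ p.2),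
        PCgM p.2 p.1 * PM p.2 with hS2
    set T₁ := ∑ m, g (h₁ m) * PM m with hT1
    set T₂ := ∑ m, g (h₂ m) * PM m with hT2
    have key : S₁ - S₂ ≤ 2 * ε := by
      have e : S₁ - S₂ = (S₁ - T₁) - (S₂ - T₂) := by rw [hT]; ring
      have a1 := abs_le.mp E1
      have a2 := abs_le.mp E2
      linarith [a1.1, a1.2, a2.1, a2.2]
    rw [hS] at key
    linarith
end

section
/- (Gap example, PS^{sm} side) With the matrix 𝓟 of the gap example (n even, δ ∈ (0, 1/n]) as conditional distribution P_{C|M}, take P_M uniform on the n messages. Then the ciphertext distribution P_C is uniform on {1,…,n}, the posterior P_{M|C}(·|c) equals the transpose rows of 𝓟, and d(P_{M|C}(·|c_1), P_M) = nδ/2. In particular, taking δ = 1/n, the scheme is IND_{2/n}-secure but there exists a message distribution and ciphertext c with d(P_{M|C}(·|c), P_M) = 1/2. -/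
open Finset

lemma sum_range_parity (k : ℕ) (a b : ℝ) :
    ∑ i ∈ Finset.range (2 * k), (if i % 2 = 0 then a else b) = k * (a + b) := by
  induction k with
  | zero => simp
  | succ k ih =>
    have h : 2 * (k + 1) = (2 * k + 1) + 1 := by ring
    rw [h, Finset.sum_range_succ, Finset.sum_range_succ, ih]
    have h1 : (2 * k + 1) % 2 = 1 := by omega
    have h2 : (2 * k) % 2 = 0 := by omega
    rw [h1, h2]
    push_cast
    ring

/-- gap example, PS^{sm} side: with the gap-example matrix and
the uniform message distribution, the ciphertext distribution is uniform, the
posterior `P_{M|C}(·|c)` is the transposed row of `𝓟`, and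
`d(P_{M|C}(·|c₁), P_M) = nδ/2`; in particular for `δ = 1/n` the scheme is
IND_{2/n}-secure yet there is a ciphertext whose posterior is at TV distance
`1/2` from the prior. -/
theorem gap_example_ps_sm_side
    (n : ℕ) (hn : 0 < n) (heven : Even n)
    (δ : ℝ) (hδ0 : 0 < δ) (hδ1 : δ ≤ 1 / n)
    (𝓟 : Fin n → Fin n → ℝ)
    (h𝓟 : ∀ i j : Fin n, 𝓟 i j =
      if (i : ℕ) = 0 then
        (if (j : ℕ) % 2 = 0 then 1 / n + δ else 1 / n - δ)
      else if (i : ℕ) = 1 then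
        (if (j : ℕ) % 2 = 0 then 1 / n - δ else 1 / n + δ)
      else 1 / n)
    (PC : Fin n → ℝ) (hPC : ∀ c, PC c = ∑ m, 𝓟 c m * (1 / n))
    (PMgC : Fin n → Fin n → ℝ)
    (hPMgC : ∀ c m, PMgC c m = 𝓟 c m * (1 / n) / PC c) :
    (∀ c, PC c = 1 / n) ∧
    (∀ c m, PMgC c m = 𝓟 c m) ∧
    ((1 / 2) * ∑ m, |PMgC ⟨0, hn⟩ m - 1 / n| = n * δ / 2) ∧
    (δ = 1 / n →
      (∀ j j' : Fin n, (1 / 2) * ∑ i, |𝓟 i j - 𝓟 i j'| ≤ 2 / n) ∧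
      ∃ c : Fin n, (1 / 2) * ∑ m, |PMgC c m - 1 / n| = 1 / 2) := by
  obtain ⟨k, hk⟩ := heven
  have hk2 : n = 2 * k := by omega
  have hnR : (0 : ℝ) < n := by exact_mod_cast hn
  have hnne : (n : ℝ) ≠ 0 := ne_of_gt hnR
  -- row sums of 𝓟
  have hrow : ∀ c : Fin n, ∑ m, 𝓟 c m = 1 := by
    intro c
    have hgen : ∀ a b : ℝ,
        (∑ m : Fin n, (if (m : ℕ) % 2 = 0 then a else b)) = k * (a + b) := by
      intro a b
      rw [Fin.sum_univ_eq_sum_range (fun i => if i % 2 = 0 then a else b) n, hk2,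
        sum_range_parity]
    rcases h0 : (c : ℕ) with _ | c'
    · have : ∑ m, 𝓟 c m = ∑ m : Fin n, (if (m : ℕ) % 2 = 0 then 1 / n + δ else 1 / n - δ) := by
        apply Finset.sum_congr rfl
        intro m _
        rw [h𝓟, h0]
        simp
      rw [this, hgen]
      have : (1 / n + δ) + (1 / n - δ) = 2 / n := by ring
      rw [this]
      field_simp
      rw [hk2]; push_cast; ring
    · rcases c' with _ | c''
      · have : ∑ m, 𝓟 c m = ∑ m : Fin n, (if (m : ℕ) % 2 = 0 then 1 / n - δ else 1 / n + δ) := by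
          apply Finset.sum_congr rfl
          intro m _
          rw [h𝓟, h0]
          simp
        rw [this, hgen]
        have : (1 / n - δ) + (1 / n + δ) = 2 / n := by ring
        rw [this]
        field_simp
        rw [hk2]; push_cast; ring
      · have : ∑ m, 𝓟 c m = ∑ m : Fin n, (1 / n : ℝ) := by
          apply Finset.sum_congr rfl
          intro m _
          rw [h𝓟, h0]
          simp
        rw [this]
        simp
        field_simp
  have hPCu : ∀ c, PC c = 1 / n := by
    intro c
    rw [hPC, ← Finset.sum_mul, hrow, one_mul]
  have hpost : ∀ c m, PMgC c m = 𝓟 c m := by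
    intro c m
    rw [hPMgC, hPCu]
    field_simp
  have habs : ∀ m : Fin n, |PMgC ⟨0, hn⟩ m - 1 / n| = δ := by
    intro m
    rw [hpost, h𝓟]
    simp only [Fin.val_mk, if_true]
    split_ifs with h
    · simp [abs_of_pos hδ0]
    · have : (1 : ℝ) / n - δ - 1 / n = -δ := by ring
      rw [this, abs_neg, abs_of_pos hδ0]
  have hsum3 : (1 / 2 : ℝ) * ∑ m, |PMgC ⟨0, hn⟩ m - 1 / n| = n * δ / 2 := by
    have : ∑ m : Fin n, |PMgC ⟨0, hn⟩ m - 1 / n| = ∑ m : Fin n, δ :=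
      Finset.sum_congr rfl fun m _ => habs m
    rw [this]
    simp [Finset.sum_const]
    ring
  refine ⟨hPCu, hpost, hsum3, ?_⟩
  intro hδ
  have hn2 : 2 ≤ n := by omega
  constructor
  · intro j j'
    have habs2 : ∀ x y : ℝ, (x = 1 / n + δ ∨ x = 1 / n - δ) →
        (y = 1 / n + δ ∨ y = 1 / n - δ) → |x - y| ≤ 2 * δ := by
      rintro x y hx hy
      rw [abs_sub_le_iff]
      rcases hx with rfl | rfl <;> rcases hy with rfl | rfl <;>
        exact ⟨by linarith, by linarith⟩
    have hbound : ∀ i : Fin n, |𝓟 i j - 𝓟 i j'| ≤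
        (if i = (⟨0, hn⟩ : Fin n) then 2 * δ else 0) +
        (if i = (⟨1, by omega⟩ : Fin n) then 2 * δ else 0) := by
      intro i
      rw [h𝓟 i j, h𝓟 i j']
      rcases hi : (i : ℕ) with _ | i'
      · have he : i = (⟨0, hn⟩ : Fin n) := by ext; simp [hi]
        have hne : i ≠ (⟨1, by omega⟩ : Fin n) := by
          intro h; rw [h] at hi; simp at hi
        rw [if_pos he, if_neg hne, add_zero]
        simp only [if_pos rfl]
        exact habs2 _ _ (by split_ifs <;> simp) (by split_ifs <;> simp)
      · rcases i' with _ | i''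
        · have he : i = (⟨1, by omega⟩ : Fin n) := by ext; simp [hi]
          have hne : i ≠ (⟨0, hn⟩ : Fin n) := by
            intro h; rw [h] at hi; simp at hi
          rw [if_neg hne, if_pos he, zero_add]
          norm_num
          exact habs2 _ _ (by split_ifs <;> simp) (by split_ifs <;> simp)
        · have hne0 : i ≠ (⟨0, hn⟩ : Fin n) := by
            intro h; rw [h] at hi; simp at hi
          have hne1 : i ≠ (⟨1, by omega⟩ : Fin n) := by
            intro h; rw [h] at hi; simp at hi
          rw [if_neg hne0, if_neg hne1]
          norm_num
    have hsum_le : ∑ i, |𝓟 i j - 𝓟 i j'| ≤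
        ∑ i : Fin n, ((if i = (⟨0, hn⟩ : Fin n) then 2 * δ else 0) +
          (if i = (⟨1, by omega⟩ : Fin n) then 2 * δ else 0)) :=
      Finset.sum_le_sum fun i _ => hbound i
    have hsum_eq : ∑ i : Fin n, ((if i = (⟨0, hn⟩ : Fin n) then 2 * δ else 0) +
          (if i = (⟨1, by omega⟩ : Fin n) then 2 * δ else 0)) = 4 * δ := by
      rw [Finset.sum_add_distrib, Finset.sum_ite_eq' _ _ (fun _ => 2 * δ),
        Finset.sum_ite_eq' _ _ (fun _ => 2 * δ)]
      simp
      ring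
    have : ∑ i, |𝓟 i j - 𝓟 i j'| ≤ 4 * δ := by rw [← hsum_eq]; exact hsum_le
    have h4 : (4 : ℝ) * δ = 4 / n := by rw [hδ]; ring
    rw [h4] at this
    have h5 : (1 / 2 : ℝ) * (4 / n) = 2 / n := by ring
    linarith
  · refine ⟨⟨0, hn⟩, ?_⟩
    rw [hsum3, hδ]
    field_simp
end

section
/- If for every message distribution P_M and every ciphertext c with P_C(c) > 0 we have d(P_{M|C}(·|c), P_M) ≤ ε (i.e., the scheme is PS^{sm}_ε-secure), then the scheme is IND_{2ε}-secure: d(P_{C|M}(·|m₀), P_{C|M}(·|m₁)) ≤ 2ε for all m₀, m₁ ∈ 𝓜. -/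
open Finset

/-- PS^{sm} ⟹ IND with factor 2: if for every message
distribution `PM` and every ciphertext `c` with positive probability the
posterior `P_{M|C}(·|c)` is within TV distance ε of `PM`, then any two
conditional ciphertext distributions are within TV distance 2ε. -/
theorem ps_sm_implies_ind2eps
    {𝓒 𝓜 : Type*} [Fintype 𝓒] [Fintype 𝓜]
    (PCgM : 𝓜 → 𝓒 → ℝ)
    (hnn : ∀ m c, 0 ≤ PCgM m c) (hsum : ∀ m, ∑ c, PCgM m c = 1)
    (ε : ℝ) (hε0 : 0 ≤ ε) (hε1 : ε ≤ 1)
    (hPS : ∀ PM : 𝓜 → ℝ, (∀ m, 0 ≤ PM m) → (∑ m, PM m = 1) →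
      ∀ c : 𝓒, 0 < (∑ m, PCgM m c * PM m) →
        (1 / 2) * ∑ m,
          |PCgM m c * PM m / (∑ m', PCgM m' c * PM m') - PM m| ≤ ε) :
    ∀ m₀ m₁ : 𝓜, (1 / 2) * ∑ c, |PCgM m₀ c - PCgM m₁ c| ≤ 2 * ε := by
  intro m₀ m₁
  by_cases hne : m₀ = m₁
  · subst hne
    simp
    positivity
  classical
  set PM : 𝓜 → ℝ := fun m => (if m = m₀ then (1:ℝ)/2 else 0) +
    (if m = m₁ then (1:ℝ)/2 else 0) with hPM
  have hPMnn : ∀ m, 0 ≤ PM m := by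
    intro m; simp only [hPM]; split_ifs <;> norm_num
  have hPMsum : ∑ m, PM m = 1 := by
    simp [hPM, Finset.sum_add_distrib, Finset.sum_ite_eq']
    norm_num
  have hPM0 : PM m₀ = 1/2 := by simp [hPM, hne]
  have hPM1 : PM m₁ = 1/2 := by simp [hPM, Ne.symm hne]
  -- PC c
  have hPC : ∀ c, (∑ m, PCgM m c * PM m) = (PCgM m₀ c + PCgM m₁ c) / 2 := by
    intro c
    have : ∀ m, PCgM m c * PM m =
        (if m = m₀ then PCgM m₀ c / 2 else 0) +
        (if m = m₁ then PCgM m₁ c / 2 else 0) := by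
      intro m
      simp only [hPM]
      split_ifs with h1 h2 h2 <;> subst_vars <;> ring_nf <;> simp_all <;> ring
    rw [Finset.sum_congr rfl (fun m _ => this m)]
    simp [Finset.sum_add_distrib, Finset.sum_ite_eq']
    ring
  -- key pointwise bound
  have key : ∀ c, |PCgM m₀ c - PCgM m₁ c| ≤ 4 * ε * ((PCgM m₀ c + PCgM m₁ c) / 2) := by
    intro c
    set a := PCgM m₀ c with ha
    set b := PCgM m₁ c with hb
    have hann : 0 ≤ a := hnn m₀ c
    have hbnn : 0 ≤ b := hnn m₁ c
    rcases eq_or_lt_of_le (by positivity : (0:ℝ) ≤ (a + b) / 2) with h0 | h0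
    · have haz : a = 0 := by linarith [abs_nonneg a]
      have hbz : b = 0 := by linarith
      simp [haz, hbz]
    · have hpos : 0 < (∑ m, PCgM m c * PM m) := by rw [hPC c]; exact h0
      have hps := hPS PM hPMnn hPMsum c hpos
      set S := (a + b) / 2 with hS
      have hinner : ∑ m, |PCgM m c * PM m / (∑ m', PCgM m' c * PM m') - PM m|
          = |a - b| / (2 * S) := by
        have hterm : ∀ m, |PCgM m c * PM m / (∑ m', PCgM m' c * PM m') - PM m|
            = (if m = m₀ then |a - b| / (4 * S) else 0) +
              (if m = m₁ then |a - b| / (4 * S) else 0) := by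
          intro m
          rw [hPC c, ← hS]
          split_ifs with h1 h2 h2
          · exact absurd (h1.symm.trans h2) hne
          · subst h1
            rw [hPM0, add_zero]
            have : a * (1/2) / S - 1/2 = (a - b) / (4 * S) := by
              field_simp
              rw [hS]; ring
            rw [this, abs_div, abs_of_pos (by positivity : (0:ℝ) < 4 * S)]
          · subst h2
            rw [hPM1, zero_add]
            have : b * (1/2) / S - 1/2 = (b - a) / (4 * S) := by
              field_simp
              rw [hS]; ring
            rw [this, abs_div, abs_of_pos (by positivity : (0:ℝ) < 4 * S),
              abs_sub_comm]
          · have : PM m = 0 := by simp [hPM, h1, h2]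
            simp [this]
        rw [Finset.sum_congr rfl (fun m _ => hterm m)]
        simp [Finset.sum_add_distrib, Finset.sum_ite_eq']
        field_simp
        ring
      rw [hinner] at hps
      have h2S : 0 < 2 * S := by positivity
      have hps' : |a - b| / (2 * S) ≤ 2 * ε := by linarith
      rw [div_le_iff₀ h2S] at hps'
      linarith
  -- sum up
  have hsum2 : ∑ c, |PCgM m₀ c - PCgM m₁ c|
      ≤ ∑ c, 4 * ε * ((PCgM m₀ c + PCgM m₁ c) / 2) :=
    Finset.sum_le_sum (fun c _ => key c)
  have : ∑ c, 4 * ε * ((PCgM m₀ c + PCgM m₁ c) / 2) = 4 * ε := by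
    rw [← Finset.mul_sum]
    have : ∑ c, (PCgM m₀ c + PCgM m₁ c) / 2 = 1 := by
      rw [← Finset.sum_div, Finset.sum_add_distrib, hsum, hsum]
      norm_num
    rw [this, mul_one]
  linarith [hsum2, this]
end
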